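/- arXiv:1803.00165 — 3 statements merged into one kernel-verified Lean document; each statement's English description precedes it below -/
import Mathlib

section
/- For every real ρ ∈ (0,1) and every ε > 0 there exist δ > 0 and N such that the following holds for all m ≥ N: if H is a simple graph on m vertices with at least ((1/2)ρ − δ)·m² edges and with Σ_{v ∈ V(H)} (deg(v) choose 2) ≤ ((1/2)ρ² + δ)·m³, then the number of vertices v of H with |deg(v) − ρm| > εm is at most εm. -/
/-- The number of edges of a simple graph. -/
noncomputable def edgeCount {V : Type*} (G : SimpleGraph V) : ℕ :=
  Nat.card G.edgeSet

/-- The degree of a vertex (cardinality of its neighborhood). -/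
noncomputable def deg {V : Type*} (G : SimpleGraph V) (v : V) : ℕ :=
  Nat.card (G.neighborSet v)

/-! The edge count pins down the first moment `∑ d_v ≈ ρ m²` of the degrees, and the path count
bounds the second moment `∑ d_v² = 2 ∑ C(d_v, 2) + ∑ d_v ≲ ρ² m³`. Hence the variance
`∑ (d_v - ρ m)²` is at most `6 δ m³ + m²`, and Chebyshev's inequality bounds the number of
vertices with `|d_v - ρ m| > ε m` by this over `(ε m)²`; the choice `δ = ε³/12`, `m ≥ 2/ε³`
makes that at most `ε m`. -/

open Finset

lemma card_filter_lt_abs_mul_sq_le_sum_sq {ι : Type*} (s : Finset ι) (f : ι → ℝ) {t : ℝ}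
    (ht : 0 ≤ t) : #{i ∈ s | t < |f i|} * t ^ 2 ≤ ∑ i ∈ s, f i ^ 2 :=
  calc (#{i ∈ s | t < |f i|} : ℝ) * t ^ 2 = ∑ i ∈ s with t < |f i|, t ^ 2 := by
        rw [sum_const, nsmul_eq_mul]
    _ ≤ ∑ i ∈ s with t < |f i|, f i ^ 2 := sum_le_sum fun i hi => by
        simpa only [sq_abs] using pow_le_pow_left₀ ht (mem_filter.mp hi).2.le 2
    _ ≤ ∑ i ∈ s, f i ^ 2 := sum_le_sum_of_subset_of_nonneg (filter_subset _ _)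
        fun i _ _ => sq_nonneg (f i)

namespace SimpleGraph

variable {V : Type*} [Fintype V] (G : SimpleGraph V) [DecidableRel G.Adj]

lemma sum_sq_degree_sub_eq (c : ℝ) :
    ∑ v, ((G.degree v : ℝ) - c) ^ 2 =
      2 * ∑ v, ((G.degree v).choose 2 : ℝ) + (1 - 2 * c) * (2 * #G.edgeFinset) +
        Fintype.card V * c ^ 2 := by
  have hsum : ∑ v, (G.degree v : ℝ) = 2 * #G.edgeFinset := by
    exact_mod_cast G.sum_degrees_eq_twice_card_edges
  simp only [Nat.cast_choose_two]
  calc ∑ v, ((G.degree v : ℝ) - c) ^ 2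
      = ∑ v, (2 * ((G.degree v : ℝ) * (G.degree v - 1) / 2) + (1 - 2 * c) * G.degree v + c ^ 2) :=
        sum_congr rfl fun v _ => by ring
    _ = _ := by rw [sum_add_distrib, sum_add_distrib, ← mul_sum, ← mul_sum, hsum, sum_const,
        card_univ, nsmul_eq_mul]

lemma two_mul_card_edgeFinset_le_sq : 2 * (#G.edgeFinset : ℝ) ≤ Fintype.card V ^ 2 := by
  have h : (#G.edgeFinset : ℝ) ≤ (Fintype.card V).choose 2 := by
    exact_mod_cast G.card_edgeFinset_le_card_choose_two
  rw [Nat.cast_choose_two] at h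
  nlinarith [(Fintype.card V).cast_nonneg (α := ℝ)]

lemma sum_sq_degree_sub_le {ρ δ : ℝ} (hρ : 0 ≤ ρ)
    (hE : (ρ / 2 - δ) * Fintype.card V ^ 2 ≤ #G.edgeFinset)
    (hP : ∑ v, ((G.degree v).choose 2 : ℝ) ≤ (ρ ^ 2 / 2 + δ) * Fintype.card V ^ 3) :
    ∑ v, ((G.degree v : ℝ) - ρ * Fintype.card V) ^ 2 ≤
      (2 + 4 * ρ) * δ * Fintype.card V ^ 3 + Fintype.card V ^ 2 := by
  have hρE := mul_le_mul_of_nonneg_left hE (by positivity : 0 ≤ 4 * ρ * Fintype.card V)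
  rw [sum_sq_degree_sub_eq]
  nlinarith [G.two_mul_card_edgeFinset_le_sq]

end SimpleGraph

lemma edgeCount_eq_card_edgeFinset {V : Type*} (G : SimpleGraph V) [Fintype G.edgeSet] :
    edgeCount G = #G.edgeFinset := by
  rw [edgeCount, Nat.card_eq_fintype_card, SimpleGraph.edgeFinset, Set.toFinset_card]

lemma deg_eq_degree {V : Type*} (G : SimpleGraph V) (v : V) [Fintype (G.neighborSet v)] :
    deg G v = G.degree v := by
  rw [deg, Nat.card_eq_fintype_card, SimpleGraph.card_neighborSet_eq_degree]

/-- Almost regularity: for every `ρ ∈ (0,1)` and `ε > 0` there are `δ > 0` and `N` such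
that every graph `H` on `m ≥ N` vertices with at least `(ρ/2 − δ)m²` edges and at most
`(ρ²/2 + δ)m³` paths on 3 vertices (i.e. `Σ_v C(deg v, 2)`) has at most `εm` vertices
whose degree differs from `ρm` by more than `εm`. -/
theorem almost_regular (ρ ε : ℝ) (hρ0 : 0 < ρ) (hρ1 : ρ < 1) (hε : 0 < ε) :
    ∃ δ : ℝ, 0 < δ ∧ ∃ N : ℕ, ∀ m : ℕ, N ≤ m → ∀ H : SimpleGraph (Fin m),
      ((1/2) * ρ - δ) * (m:ℝ)^2 ≤ (edgeCount H : ℝ) →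
      (∑ v : Fin m, ((deg H v).choose 2 : ℝ)) ≤ ((1/2) * ρ^2 + δ) * (m:ℝ)^3 →
      (Nat.card {v : Fin m | ε * (m:ℝ) < |(deg H v : ℝ) - ρ * (m:ℝ)|} : ℝ) ≤ ε * (m:ℝ) := by
  classical
  refine ⟨ε ^ 3 / 12, by positivity, ⌈2 / ε ^ 3⌉₊, fun m hm H hE hP => ?_⟩
  have hm : 2 ≤ ε ^ 3 * m := (div_le_iff₀' (by positivity)).mp (Nat.ceil_le.mp hm)
  have hεm : 0 < ε * m :=
    mul_pos hε (pos_of_mul_pos_right (by linarith : 0 < ε ^ 3 * (m : ℝ)) (by positivity))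
  simp only [deg_eq_degree, Set.coe_ofPred, Nat.card_eq_fintype_card, Fintype.card_subtype] at hP ⊢
  rw [edgeCount_eq_card_edgeFinset] at hE
  have hvar := H.sum_sq_degree_sub_le (δ := ε ^ 3 / 12) hρ0.le
    (by rw [Fintype.card_fin]; linarith) (by rw [Fintype.card_fin]; linarith)
  have hcount := card_filter_lt_abs_mul_sq_le_sum_sq univ
    (fun v => (H.degree v : ℝ) - ρ * m) hεm.le
  simp only [Fintype.card_fin] at hvar
  refine le_of_mul_le_mul_right ?_ (pow_pos hεm 2)
  calc _ ≤ (2 + 4 * ρ) * (ε ^ 3 / 12) * m ^ 3 + m ^ 2 := hcount.trans hvar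
    _ ≤ ε ^ 3 / 2 * m ^ 3 + ε ^ 3 / 2 * m ^ 3 := by
      gcongr ?_ + ?_
      · gcongr; nlinarith [pow_pos hε 3]
      · nlinarith [sq_nonneg (m : ℝ)]
    _ = ε * m * (ε * m) ^ 2 := by ring
end

section
/- For every integer k ≥ 3, the real symmetric 3×3 matrix A(k) with entries A₁₁ = 32k² − 96k + 96, A₁₂ = A₂₁ = 0, A₁₃ = A₃₁ = 4k² − 16k, A₂₂ = 10k⁴ − 30k³ − 8k² + 96k − 96, A₂₃ = A₃₂ = −10k⁴ + 35k³ − 4k² − 80k + 96, A₃₃ = 10k⁴ − 40k³ + 24k² + 64k − 96 is positive definite; consequently, for every real 3×6 matrix B, the 6×6 matrix (3/(2k⁴))·Bᵀ A(k) B is positive semidefinite. -/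
open Matrix

/-- The matrix `A(k)` from the flag-algebra certificate. -/
noncomputable def Amat (k : ℕ) : Matrix (Fin 3) (Fin 3) ℝ :=
  !![32*(k:ℝ)^2 - 96*(k:ℝ) + 96, 0, 4*(k:ℝ)^2 - 16*(k:ℝ);
     0, 10*(k:ℝ)^4 - 30*(k:ℝ)^3 - 8*(k:ℝ)^2 + 96*(k:ℝ) - 96,
       -10*(k:ℝ)^4 + 35*(k:ℝ)^3 - 4*(k:ℝ)^2 - 80*(k:ℝ) + 96;
     4*(k:ℝ)^2 - 16*(k:ℝ), -10*(k:ℝ)^4 + 35*(k:ℝ)^3 - 4*(k:ℝ)^2 - 80*(k:ℝ) + 96,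
       10*(k:ℝ)^4 - 40*(k:ℝ)^3 + 24*(k:ℝ)^2 + 64*(k:ℝ) - 96]

/-! By Sylvester's criterion `A(k)` is positive definite as soon as its leading principal minors
are positive; these are polynomials in `k` whose coefficients, after the substitution
`k = m + 3`, are all positive. For a `3 × 3` matrix with vanishing `(0, 1)` entry the criterion
follows by completing the square in the first two coordinates of the quadratic form. -/

theorem posDef_fin_three_of_minors_pos {a b c d e : ℝ} (ha : 0 < a) (hb : 0 < b)
    (hdet : 0 < a * b * d - a * e ^ 2 - b * c ^ 2) :
    (!![a, 0, c; 0, b, e; c, e, d] : Matrix (Fin 3) (Fin 3) ℝ).PosDef := by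
  refine .of_dotProduct_mulVec_pos ?_ fun x hx => ?_
  · ext i j
    fin_cases i <;> fin_cases j <;> rfl
  have hform : star x ⬝ᵥ (!![a, 0, c; 0, b, e; c, e, d] *ᵥ x) =
      a * x 0 ^ 2 + b * x 1 ^ 2 + d * x 2 ^ 2 + 2 * c * x 0 * x 2 + 2 * e * x 1 * x 2 := by
    simp only [dotProduct, mulVec, Fin.sum_univ_three, star_trivial, of_apply, cons_val',
      cons_val_zero, cons_val_one, cons_val, cons_val_fin_one, zero_mul, add_zero, zero_add]
    ring
  have hsquares : a * b * (a * x 0 ^ 2 + b * x 1 ^ 2 + d * x 2 ^ 2 + 2 * c * x 0 * x 2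
      + 2 * e * x 1 * x 2) = b * (a * x 0 + c * x 2) ^ 2 + a * (b * x 1 + e * x 2) ^ 2
      + (a * b * d - a * e ^ 2 - b * c ^ 2) * x 2 ^ 2 := by ring
  rw [hform, ← mul_pos_iff_of_pos_left (mul_pos ha hb), hsquares]
  rcases eq_or_ne (x 2) 0 with h2 | h2
  · obtain ⟨i, hi⟩ := Function.ne_iff.mp hx
    simp only [h2, mul_zero, add_zero, ne_eq, OfNat.ofNat_ne_zero, not_false_eq_true, zero_pow]
    fin_cases i
    · have : x 0 ≠ 0 := hi
      positivity
    · have : x 1 ≠ 0 := hi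
      positivity
    · exact absurd h2 hi
  · positivity

/-- For every `k ≥ 3` the matrix `A(k)` is positive definite and, consequently, for every
real `3×6` matrix `B`, the matrix `(3/(2k⁴))·Bᵀ A(k) B` is positive semidefinite. -/
theorem Amat_posDef (k : ℕ) (hk : 3 ≤ k) :
    (Amat k).PosDef ∧
      ∀ B : Matrix (Fin 3) (Fin 6) ℝ, ((3/(2*(k:ℝ)^4)) • (Bᵀ * Amat k * B)).PosSemidef := by
  have hA : (Amat k).PosDef := by
    obtain ⟨m, rfl⟩ : ∃ m, k = m + 3 := ⟨k - 3, by omega⟩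
    apply posDef_fin_three_of_minors_pos <;> push_cast <;> ring_nf <;> positivity
  refine ⟨hA, fun B => PosSemidef.smul ?_ (by positivity)⟩
  simpa using hA.posSemidef.conjTranspose_mul_mul_same B
end

section
/- Let R be the set of sequences ρ = (ρ₁, ρ₂, …) of reals in [0,1] with ρ₁ ≥ ρ₂ ≥ ⋯ and Σ_{i≥1} ρ_i ≤ 1, and for ρ ∈ R write ρ₀ = 1 − Σ_{i≥1} ρ_i. For a finite simple graph F on vertex set V(F) and ρ ∈ R, define t(F, ρ) = Σ_f Π_{v ∈ V(F)} ρ_{f(v)}, where the sum is over all maps f : V(F) → {0,1,2,…} such that for every pair of distinct vertices u, v of F: u and v are non-adjacent in F if and only if f(u) = f(v) ≥ 1. Then: if a sequence ρ⁽ⁿ⁾ ∈ R converges pointwise (coordinatewise) to a sequence ρ ∈ [0,1]^{ℕ}, then ρ ∈ R, and for every finite simple graph F one has t(F, ρ⁽ⁿ⁾) → t(F, ρ) as n → ∞. -/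
attribute [local instance] Classical.propDecidable

open Filter

/-- Membership in the set `R`: a sequence `(ρ₁, ρ₂, …)` (here `ρ i` stands for `ρ_{i+1}`)
of reals in `[0,1]`, non-increasing, with sum at most `1`. -/
def memR (ρ : ℕ → ℝ) : Prop :=
  (∀ i, 0 ≤ ρ i ∧ ρ i ≤ 1) ∧ (∀ i, ρ (i + 1) ≤ ρ i) ∧ Summable ρ ∧ (∑' i, ρ i) ≤ 1

/-- The induced homomorphism density `t(F, ρ)` of a finite simple graph `F` in the
complete-multipartite-type graphon with part weights `ρ₁, ρ₂, …` and dust weight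
`ρ₀ = 1 − Σ_{i≥1} ρ_i`.  A map `f : V(F) → ℕ` assigns each vertex either the dust
(value `0`) or a part (value `j+1` for part `j`); it contributes the product of the
corresponding weights provided distinct vertices are non-adjacent in `F` exactly when
they are mapped to the same genuine part. -/
noncomputable def tInd {l : ℕ} (F : SimpleGraph (Fin l)) (ρ : ℕ → ℝ) : ℝ :=
  ∑' f : Fin l → ℕ,
    if ∀ u v : Fin l, u ≠ v → (¬ F.Adj u v ↔ (f u = f v ∧ f u ≠ 0)) then
      ∏ v : Fin l, (if f v = 0 then 1 - ∑' i, ρ i else ρ (f v - 1))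
    else 0

open Finset

set_option maxHeartbeats 1000000

namespace TIndAux

/-! ### Sums of products over `Fin n → κ` -/

lemma summable_fin_prod {κ : Type*} : ∀ {n : ℕ} {q : Fin n → κ → ℝ},
    (∀ i, Summable (q i)) → Summable (fun x : Fin n → κ => ∏ i, q i (x i)) := by
  intro n
  induction n with
  | zero =>
      intro q _
      have h : HasSum (fun x : Fin 0 → κ => ∏ i, q i (x i))
          (∏ i : Fin 0, q i ((fun j : Fin 0 => j.elim0) i)) :=
        hasSum_single _ (fun b' hb' => (hb' (funext fun j => j.elim0)).elim)
      exact h.summable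
  | succ n ih =>
      intro q hq
      have h1 : Summable (fun a : κ => |q 0 a|) := (hq 0).abs
      have h2 : Summable (fun y : Fin n → κ => ∏ i : Fin n, |q i.succ (y i)|) :=
        ih (q := fun i k => |q i.succ k|) (fun i => (hq i.succ).abs)
      have habs : Summable (fun p : κ × (Fin n → κ) =>
          |q 0 p.1| * ∏ i : Fin n, |q i.succ (p.2 i)|) := by
        apply Summable.mul_of_nonneg h1 h2 (fun k => abs_nonneg _)
          (fun y => Finset.prod_nonneg fun i _ => abs_nonneg _)
      have hF : Summable (fun p : κ × (Fin n → κ) =>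
          q 0 p.1 * ∏ i : Fin n, q i.succ (p.2 i)) := by
        refine Summable.of_abs (habs.congr fun p => ?_)
        rw [abs_mul, Finset.abs_prod]
      have := hF.comp_injective
        (Fin.consEquiv (fun _ : Fin (n + 1) => κ)).symm.injective
      refine this.congr fun x => ?_
      show q 0 (x 0) * ∏ i : Fin n, q i.succ (Fin.tail x i) = ∏ i, q i (x i)
      rw [Fin.prod_univ_succ]
      rfl

lemma tsum_fin_prod {κ : Type*} : ∀ {n : ℕ} {q : Fin n → κ → ℝ},
    (∀ i, Summable (q i)) →
    ∑' x : Fin n → κ, ∏ i, q i (x i) = ∏ i, ∑' k, q i k := by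
  intro n
  induction n with
  | zero =>
      intro q _
      have h : HasSum (fun x : Fin 0 → κ => ∏ i, q i (x i))
          (∏ i : Fin 0, q i ((fun j : Fin 0 => j.elim0) i)) :=
        hasSum_single _ (fun b' hb' => (hb' (funext fun j => j.elim0)).elim)
      rw [h.tsum_eq]
      simp
  | succ n ih =>
      intro q hq
      set e := (Fin.consEquiv (fun _ : Fin (n + 1) => κ)).symm with he
      set F : κ × (Fin n → κ) → ℝ :=
        fun p => q 0 p.1 * ∏ i : Fin n, q i.succ (p.2 i) with hFdef
      have hpi : Summable (fun x : Fin (n + 1) → κ => ∏ i, q i (x i)) :=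
        summable_fin_prod hq
      have hcomp : (fun x : Fin (n + 1) → κ => ∏ i, q i (x i)) = F ∘ e := by
        funext x
        show ∏ i, q i (x i) = q 0 (x 0) * ∏ i : Fin n, q i.succ (Fin.tail x i)
        rw [Fin.prod_univ_succ]
        rfl
      have hF : Summable F := (Equiv.summable_iff e).mp (by rw [← hcomp]; exact hpi)
      calc ∑' x : Fin (n + 1) → κ, ∏ i, q i (x i)
          = ∑' x : Fin (n + 1) → κ, F (e x) := by rw [hcomp]; rfl
        _ = ∑' p, F p := e.tsum_eq F
        _ = ∑' a, ∑' y : Fin n → κ, q 0 a * ∏ i : Fin n, q i.succ (y i) :=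
            Summable.tsum_prod' hF (fun b => hF.prod_factor b)
        _ = ∑' a, q 0 a * ∑' y : Fin n → κ, ∏ i : Fin n, q i.succ (y i) :=
            tsum_congr fun a => tsum_mul_left
        _ = (∑' a, q 0 a) * ∑' y : Fin n → κ, ∏ i : Fin n, q i.succ (y i) :=
            tsum_mul_right
        _ = ∏ i, ∑' k, q i k := by
            rw [ih (fun i => hq i.succ), Fin.prod_univ_succ]

/-! ### Combinatorial definitions -/

variable {l : ℕ}

/-- The validity predicate on labelings. -/
def Pcond (F : SimpleGraph (Fin l)) (f : Fin l → ℕ) : Prop :=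
  ∀ u v : Fin l, u ≠ v → (¬ F.Adj u v ↔ (f u = f v ∧ f u ≠ 0))

/-- Support of a labeling. -/
noncomputable def suppF (φ : Fin l → ℕ) : Finset (Fin l) :=
  Finset.univ.filter fun v => φ v ≠ 0

/-- Restriction of a labeling to a set. -/
noncomputable def fA (φ : Fin l → ℕ) (A : Finset (Fin l)) : Fin l → ℕ :=
  fun v => if v ∈ A then φ v else 0

/-- The complementary part. -/
noncomputable def hB (φ : Fin l → ℕ) (A : Finset (Fin l)) : Fin l → ℕ :=
  fun v => if v ∈ A then 0 else φ v

/-- The signed combinatorial coefficient. -/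
noncomputable def Cc (F : SimpleGraph (Fin l)) (φ : Fin l → ℕ) : ℝ :=
  ∑ A ∈ (suppF φ).powerset,
    if Pcond F (fA φ A) then (-1 : ℝ) ^ ((suppF φ \ A).card) else 0

/-- The monomial attached to a labeling. -/
noncomputable def mρ (ρ' : ℕ → ℝ) (φ : Fin l → ℕ) : ℝ :=
  ∏ v, (if φ v = 0 then (1 : ℝ) else ρ' (φ v - 1))

/-- Positive weights. -/
noncomputable def w1 (ρ' : ℕ → ℝ) : ℕ → ℝ := fun j => if j = 0 then 1 else ρ' (j - 1)

/-- Signed weights whose sum is the dust weight. -/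
noncomputable def Ew (ρ' : ℕ → ℝ) : ℕ → ℝ := fun j => if j = 0 then 1 else -ρ' (j - 1)

/-- Per-vertex kernel. -/
noncomputable def Gv (ρ' : ℕ → ℝ) (f : Fin l → ℕ) (v : Fin l) : ℕ → ℝ :=
  fun j => if f v = 0 then Ew ρ' j else (if j = 0 then ρ' (f v - 1) else 0)

/-- The two-variable kernel. -/
noncomputable def Wk (F : SimpleGraph (Fin l)) (ρ' : ℕ → ℝ) :
    ((Fin l → ℕ) × (Fin l → ℕ)) → ℝ :=
  fun p => (if Pcond F p.1 then (1 : ℝ) else 0) * ∏ v, Gv ρ' p.1 v (p.2 v)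

/-- The reindexed signed kernel. -/
noncomputable def gq (F : SimpleGraph (Fin l)) (ρ' : ℕ → ℝ) :
    ((Fin l → ℕ) × Finset (Fin l)) → ℝ :=
  fun q => if q.2 ⊆ suppF q.1 then
    (if Pcond F (fA q.1 q.2) then (-1 : ℝ) ^ ((suppF q.1 \ q.2).card) else 0)
      * mρ ρ' q.1
  else 0

/-! ### Elementary facts about `memR` -/

lemma memR_nonneg {ρ' : ℕ → ℝ} (h : memR ρ') (i : ℕ) : 0 ≤ ρ' i := (h.1 i).1

lemma memR_le_inv {ρ' : ℕ → ℝ} (h : memR ρ') (i : ℕ) : ρ' i ≤ 1 / (i + 1) := by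
  have hanti : Antitone ρ' := antitone_nat_of_succ_le h.2.1
  have h1 : ((i : ℝ) + 1) * ρ' i ≤ 1 := by
    have hstep : ∑ _k ∈ Finset.range (i + 1), ρ' i ≤ ∑ k ∈ Finset.range (i + 1), ρ' k :=
      Finset.sum_le_sum fun k hk => hanti (by
        have := Finset.mem_range.mp hk; omega)
    have h2 : ∑ k ∈ Finset.range (i + 1), ρ' k ≤ ∑' k, ρ' k :=
      Summable.sum_le_tsum _ (fun k _ => memR_nonneg h k) h.2.2.1
    have h3 : ∑ _k ∈ Finset.range (i + 1), ρ' i = ((i : ℝ) + 1) * ρ' i := by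
      rw [Finset.sum_const, Finset.card_range, nsmul_eq_mul]
      push_cast
      ring
    calc ((i : ℝ) + 1) * ρ' i = ∑ _k ∈ Finset.range (i + 1), ρ' i := h3.symm
      _ ≤ ∑ k ∈ Finset.range (i + 1), ρ' k := hstep
      _ ≤ ∑' k, ρ' k := h2
      _ ≤ 1 := h.2.2.2
  rw [le_div_iff₀ (by positivity)]
  nlinarith [h1]

/-! ### Summability of the auxiliary weights -/

lemma summable_w1 {ρ' : ℕ → ℝ} (h : memR ρ') : Summable (w1 ρ') := by
  rw [← summable_nat_add_iff 1]
  exact h.2.2.1.congr fun j => by simp [w1]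

lemma w1_nonneg {ρ' : ℕ → ℝ} (h : memR ρ') (j : ℕ) : 0 ≤ w1 ρ' j := by
  by_cases hj : j = 0 <;> simp [w1, hj, memR_nonneg h]

lemma Ew_abs {ρ' : ℕ → ℝ} (h : memR ρ') (j : ℕ) : |Ew ρ' j| = w1 ρ' j := by
  by_cases hj : j = 0 <;>
    simp [Ew, w1, hj, abs_of_nonneg (memR_nonneg h _)]

lemma summable_Ew {ρ' : ℕ → ℝ} (h : memR ρ') : Summable (Ew ρ') := by
  refine Summable.of_abs ((summable_w1 h).congr fun j => (Ew_abs h j).symm)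

lemma tsum_Ew {ρ' : ℕ → ℝ} (h : memR ρ') : ∑' j, Ew ρ' j = 1 - ∑' i, ρ' i := by
  rw [Summable.tsum_eq_zero_add (summable_Ew h)]
  have h1 : (fun j : ℕ => Ew ρ' (j + 1)) = fun j => -ρ' j := by
    funext j; simp [Ew]
  have h0 : Ew ρ' 0 = 1 := by simp [Ew]
  rw [h0, h1, tsum_neg]
  ring

/-! ### Summability of the kernel `Wk` -/

lemma Gv_abs_le {ρ' : ℕ → ℝ} (h : memR ρ') (f : Fin l → ℕ) (v : Fin l) (j : ℕ) :
    |Gv ρ' f v j| ≤ w1 ρ' (f v) * w1 ρ' j := by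
  by_cases hf : f v = 0
  · rw [show Gv ρ' f v j = Ew ρ' j by simp [Gv, hf], Ew_abs h j, hf]
    simp [w1]
  · by_cases hj : j = 0
    · rw [show Gv ρ' f v j = ρ' (f v - 1) by simp [Gv, hf, hj], hj,
        abs_of_nonneg (memR_nonneg h _)]
      simp [w1, hf]
    · rw [show Gv ρ' f v j = 0 by simp [Gv, hf, hj], abs_zero]
      exact mul_nonneg (w1_nonneg h _) (w1_nonneg h _)

lemma summable_pair_w1 {ρ' : ℕ → ℝ} (h : memR ρ') :
    Summable (fun p : (Fin l → ℕ) × (Fin l → ℕ) => ∏ v, w1 ρ' (p.1 v) * w1 ρ' (p.2 v)) := by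
  have hf : Summable (fun x : Fin l → ℕ => ∏ v, w1 ρ' (x v)) :=
    summable_fin_prod fun _ => summable_w1 h
  have hmul : Summable (fun p : (Fin l → ℕ) × (Fin l → ℕ) =>
      (∏ v, w1 ρ' (p.1 v)) * (∏ v, w1 ρ' (p.2 v))) := by
    apply Summable.mul_of_nonneg hf hf
      (fun x => Finset.prod_nonneg fun v _ => w1_nonneg h _)
      (fun x => Finset.prod_nonneg fun v _ => w1_nonneg h _)
  exact hmul.congr fun p => Finset.prod_mul_distrib.symm

lemma summable_Wk (F : SimpleGraph (Fin l)) {ρ' : ℕ → ℝ} (h : memR ρ') :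
    Summable (Wk F ρ') := by
  apply Summable.of_abs
  refine Summable.of_nonneg_of_le (fun p => abs_nonneg _) (fun p => ?_) (summable_pair_w1 h)
  calc |Wk F ρ' p|
      = |if Pcond F p.1 then (1 : ℝ) else 0| * |∏ v, Gv ρ' p.1 v (p.2 v)| := by
        rw [Wk, abs_mul]
    _ ≤ 1 * |∏ v, Gv ρ' p.1 v (p.2 v)| := by
        apply mul_le_mul_of_nonneg_right _ (abs_nonneg _)
        split <;> simp
    _ = ∏ v, |Gv ρ' p.1 v (p.2 v)| := by rw [one_mul, Finset.abs_prod]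
    _ ≤ ∏ v, w1 ρ' (p.1 v) * w1 ρ' (p.2 v) :=
        Finset.prod_le_prod (fun v _ => abs_nonneg _) (fun v _ => Gv_abs_le h p.1 v (p.2 v))

/-! ### First identity: `tInd` as a double sum -/

lemma tInd_eq_tsum_Wk (F : SimpleGraph (Fin l)) {ρ' : ℕ → ℝ} (h : memR ρ') :
    tInd F ρ' = ∑' p : (Fin l → ℕ) × (Fin l → ℕ), Wk F ρ' p := by
  have hWs := summable_Wk F h
  rw [Summable.tsum_prod' hWs (fun b => hWs.prod_factor b)]
  rw [tInd]
  apply tsum_congr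
  intro f
  have hGsummable : ∀ v, Summable (Gv ρ' f v) := by
    intro v
    by_cases hv : f v = 0
    · have hfun : Gv ρ' f v = Ew ρ' := by funext j; simp [Gv, hv]
      rw [hfun]; exact summable_Ew h
    · have hfun : Gv ρ' f v = fun j => if j = 0 then ρ' (f v - 1) else 0 := by
        funext j; simp [Gv, hv]
      rw [hfun]
      exact summable_of_ne_finset_zero (s := {0}) (fun j hj => by
        simp only [Finset.mem_singleton] at hj
        simp [hj])
  have hGtsum : ∀ v, ∑' j, Gv ρ' f v j
      = (if f v = 0 then 1 - ∑' i, ρ' i else ρ' (f v - 1)) := by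
    intro v
    by_cases hv : f v = 0
    · rw [if_pos hv]
      have hfun : Gv ρ' f v = Ew ρ' := by funext j; simp [Gv, hv]
      rw [hfun]; exact tsum_Ew h
    · rw [if_neg hv]
      have heq : ∑' j, Gv ρ' f v j = ∑ j ∈ ({0} : Finset ℕ), Gv ρ' f v j := by
        apply tsum_eq_sum
        intro j hj
        simp only [Finset.mem_singleton] at hj
        simp [Gv, hv, hj]
      rw [heq, Finset.sum_singleton]
      simp [Gv, hv]
  have hstep1 : (if (∀ u v : Fin l, u ≠ v → (¬ F.Adj u v ↔ (f u = f v ∧ f u ≠ 0))) then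
        ∏ v, (if f v = 0 then 1 - ∑' i, ρ' i else ρ' (f v - 1)) else 0)
      = (if Pcond F f then (1 : ℝ) else 0)
          * ∏ v, (if f v = 0 then 1 - ∑' i, ρ' i else ρ' (f v - 1)) := by
    by_cases hP : Pcond F f
    · rw [if_pos hP, if_pos (show ∀ u v : Fin l, u ≠ v →
        (¬ F.Adj u v ↔ (f u = f v ∧ f u ≠ 0)) from hP), one_mul]
    · rw [if_neg hP, if_neg (show ¬ ∀ u v : Fin l, u ≠ v →
        (¬ F.Adj u v ↔ (f u = f v ∧ f u ≠ 0)) from hP), zero_mul]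
  rw [hstep1]
  calc (if Pcond F f then (1 : ℝ) else 0)
          * ∏ v, (if f v = 0 then 1 - ∑' i, ρ' i else ρ' (f v - 1))
      = (if Pcond F f then (1 : ℝ) else 0) * ∏ v, (∑' j, Gv ρ' f v j) := by
        rw [Finset.prod_congr rfl fun v _ => (hGtsum v)]
    _ = (if Pcond F f then (1 : ℝ) else 0)
          * ∑' hh : Fin l → ℕ, ∏ v, Gv ρ' f v (hh v) := by
        rw [tsum_fin_prod hGsummable]
    _ = ∑' hh : Fin l → ℕ, Wk F ρ' (f, hh) := by
        rw [← tsum_mul_left]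
        exact tsum_congr fun hh => rfl

/-! ### Second identity: reindexing by `(φ, A)` -/

lemma fA_add_hB (φ : Fin l → ℕ) (A : Finset (Fin l)) (v : Fin l) :
    fA φ A v + hB φ A v = φ v := by
  by_cases hv : v ∈ A <;> simp [fA, hB, hv]

lemma mem_suppF {φ : Fin l → ℕ} {v : Fin l} : v ∈ suppF φ ↔ φ v ≠ 0 := by
  simp [suppF]

lemma Wk_eq (F : SimpleGraph (Fin l)) (ρ' : ℕ → ℝ) {φ : Fin l → ℕ}
    {A : Finset (Fin l)} (hAs : A ⊆ suppF φ) :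
    Wk F ρ' (fA φ A, hB φ A)
      = (if Pcond F (fA φ A) then (-1 : ℝ) ^ ((suppF φ \ A).card) else 0) * mρ ρ' φ := by
  have hprod : ∏ v, Gv ρ' (fA φ A) v (hB φ A v)
      = ((-1 : ℝ) ^ ((suppF φ \ A).card)) * mρ ρ' φ := by
    have h1 : ∀ v, Gv ρ' (fA φ A) v (hB φ A v)
        = (if v ∈ A ∨ φ v = 0 then (1 : ℝ) else -1)
          * (if φ v = 0 then (1 : ℝ) else ρ' (φ v - 1)) := by
      intro v
      by_cases hv : v ∈ A
      · have hφv : φ v ≠ 0 := mem_suppF.mp (hAs hv)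
        simp [Gv, fA, hB, hv, hφv]
      · by_cases hφv : φ v = 0 <;> simp [Gv, fA, hB, hv, hφv, Ew]
    rw [Finset.prod_congr rfl (fun v _ => h1 v), Finset.prod_mul_distrib]
    have hsign : ∏ v, (if v ∈ A ∨ φ v = 0 then (1 : ℝ) else -1)
        = (-1 : ℝ) ^ ((suppF φ \ A).card) := by
      rw [Finset.prod_ite, Finset.prod_const_one, Finset.prod_const, one_mul]
      congr 2
      ext v
      simp only [Finset.mem_filter, Finset.mem_univ, true_and, Finset.mem_sdiff, mem_suppF,
        not_or]
      tauto
    rw [hsign]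
    rfl
  rw [Wk]
  show (if Pcond F (fA φ A) then (1 : ℝ) else 0) * ∏ v, Gv ρ' (fA φ A) v (hB φ A v) = _
  rw [hprod]
  split <;> ring

lemma tsum_Wk_eq_gq (F : SimpleGraph (Fin l)) (ρ' : ℕ → ℝ) :
    ∑' p : (Fin l → ℕ) × (Fin l → ℕ), Wk F ρ' p
      = ∑' q : (Fin l → ℕ) × Finset (Fin l), gq F ρ' q := by
  have hsub : ∀ x : Function.support (gq F ρ'), x.1.2 ⊆ suppF x.1.1 := by
    rintro ⟨⟨φ, A⟩, hx⟩
    by_contra hc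
    exact hx (by simp [gq, hc])
  apply tsum_eq_tsum_of_ne_zero_bij
    (i := fun x => (fA x.1.1 x.1.2, hB x.1.1 x.1.2))
  · -- injectivity
    rintro ⟨⟨φ, A⟩, hx⟩ ⟨⟨ψ, B⟩, hy⟩ hxy
    have hAs : A ⊆ suppF φ := hsub ⟨(φ, A), hx⟩
    have hBs : B ⊆ suppF ψ := hsub ⟨(ψ, B), hy⟩
    have h1 : fA φ A = fA ψ B := congrArg Prod.fst hxy
    have h2 : hB φ A = hB ψ B := congrArg Prod.snd hxy
    have hφψ : φ = ψ := by
      funext v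
      rw [← fA_add_hB φ A v, ← fA_add_hB ψ B v, h1, h2]
    have hAB : A = B := by
      ext v
      have hmemA : v ∈ A ↔ fA φ A v ≠ 0 := by
        constructor
        · intro hv
          have hφv : φ v ≠ 0 := mem_suppF.mp (hAs hv)
          simp [fA, hv, hφv]
        · intro hv
          by_contra hc
          exact hv (by simp [fA, hc])
      have hmemB : v ∈ B ↔ fA ψ B v ≠ 0 := by
        constructor
        · intro hv
          have hψv : ψ v ≠ 0 := mem_suppF.mp (hBs hv)
          simp [fA, hv, hψv]
        · intro hv
          by_contra hc
          exact hv (by simp [fA, hc])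
      rw [hmemA, hmemB, h1]
    exact Subtype.ext (Prod.ext hφψ hAB)
  · -- support of Wk is contained in the range
    rintro p hp
    have hWp : Wk F ρ' p ≠ 0 := hp
    have hdisj : ∀ v, p.1 v ≠ 0 → p.2 v = 0 := by
      intro v hv
      by_contra hv2
      apply hWp
      have hzero : Gv ρ' p.1 v (p.2 v) = 0 := by simp [Gv, hv, hv2]
      rw [Wk, Finset.prod_eq_zero (Finset.mem_univ v) hzero, mul_zero]
    set φ : Fin l → ℕ := fun v => p.1 v + p.2 v with hφdef
    set A : Finset (Fin l) := suppF p.1 with hAdef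
    have hAs : A ⊆ suppF φ := by
      intro v hv
      rw [mem_suppF] at hv ⊢
      simp only [hφdef]
      omega
    have hfa : fA φ A = p.1 := by
      funext v
      by_cases hv : p.1 v = 0
      · have : v ∉ A := by rw [hAdef, mem_suppF]; simpa using hv
        simp [fA, this, hv]
      · have hvA : v ∈ A := by rw [hAdef, mem_suppF]; exact hv
        have := hdisj v hv
        simp [fA, hvA, hφdef, this]
    have hhb : hB φ A = p.2 := by
      funext v
      by_cases hv : p.1 v = 0
      · have : v ∉ A := by rw [hAdef, mem_suppF]; simpa using hv
        simp [hB, this, hφdef, hv]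
      · have hvA : v ∈ A := by rw [hAdef, mem_suppF]; exact hv
        have := hdisj v hv
        simp [hB, hvA, this]
    have hWeq : Wk F ρ' (fA φ A, hB φ A) = Wk F ρ' p := by
      rw [hfa, hhb]
    have hgne : gq F ρ' (φ, A) ≠ 0 := by
      have : gq F ρ' (φ, A)
          = (if Pcond F (fA φ A) then (-1 : ℝ) ^ ((suppF φ \ A).card) else 0) * mρ ρ' φ := by
        simp only [gq, if_pos hAs]
      rw [this, ← Wk_eq F ρ' hAs, hWeq]
      exact hWp
    refine ⟨⟨(φ, A), hgne⟩, ?_⟩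
    show (fA φ A, hB φ A) = p
    rw [hfa, hhb]
  · -- values agree
    rintro ⟨⟨φ, A⟩, hx⟩
    have hAs : A ⊆ suppF φ := hsub ⟨(φ, A), hx⟩
    show Wk F ρ' (fA φ A, hB φ A) = gq F ρ' (φ, A)
    rw [Wk_eq F ρ' hAs]
    simp only [gq, if_pos hAs]

/-! ### Summability of `gq` and the final reduction -/

lemma mρ_eq_prod_w1 (ρ' : ℕ → ℝ) (φ : Fin l → ℕ) :
    mρ ρ' φ = ∏ v, w1 ρ' (φ v) := by
  apply Finset.prod_congr rfl
  intro v _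
  rfl

lemma summable_gq (F : SimpleGraph (Fin l)) {ρ' : ℕ → ℝ} (h : memR ρ') :
    Summable (gq F ρ') := by
  have hbase : Summable (fun q : (Fin l → ℕ) × Finset (Fin l) =>
      (∏ v, w1 ρ' (q.1 v)) * (1 : ℝ)) := by
    apply Summable.mul_of_nonneg (summable_fin_prod fun _ => summable_w1 h)
      (Summable.of_finite (f := fun _ : Finset (Fin l) => (1 : ℝ)))
      (fun y => Finset.prod_nonneg fun v _ => w1_nonneg h _) (fun _ => zero_le_one)
  apply Summable.of_abs
  refine Summable.of_nonneg_of_le (fun q => abs_nonneg _) (fun q => ?_) hbase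
  rw [mul_one]
  by_cases hq : q.2 ⊆ suppF q.1
  · have : gq F ρ' q
        = (if Pcond F (fA q.1 q.2) then (-1 : ℝ) ^ ((suppF q.1 \ q.2).card) else 0)
          * mρ ρ' q.1 := by simp only [gq, if_pos hq]
    rw [this, abs_mul]
    have h1 : |if Pcond F (fA q.1 q.2) then (-1 : ℝ) ^ ((suppF q.1 \ q.2).card) else 0| ≤ 1 := by
      split
      · rw [abs_pow, abs_neg, abs_one, one_pow]
      · simp
    have h2 : |mρ ρ' q.1| = ∏ v, w1 ρ' (q.1 v) := by
      rw [mρ_eq_prod_w1, abs_of_nonneg (Finset.prod_nonneg fun v _ => w1_nonneg h _)]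
    rw [h2]
    calc |if Pcond F (fA q.1 q.2) then (-1 : ℝ) ^ ((suppF q.1 \ q.2).card) else 0|
          * ∏ v, w1 ρ' (q.1 v)
        ≤ 1 * ∏ v, w1 ρ' (q.1 v) := by
          exact mul_le_mul_of_nonneg_right h1
            (Finset.prod_nonneg fun v _ => w1_nonneg h _)
      _ = ∏ v, w1 ρ' (q.1 v) := one_mul _
  · have : gq F ρ' q = 0 := by simp only [gq, if_neg hq]
    rw [this, abs_zero]
    exact Finset.prod_nonneg fun v _ => w1_nonneg h _

lemma tsum_gq (F : SimpleGraph (Fin l)) {ρ' : ℕ → ℝ} (h : memR ρ') :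
    ∑' q : (Fin l → ℕ) × Finset (Fin l), gq F ρ' q
      = ∑' φ : Fin l → ℕ, Cc F φ * mρ ρ' φ := by
  have hgs := summable_gq F h
  rw [Summable.tsum_prod' hgs (fun b => hgs.prod_factor b)]
  apply tsum_congr
  intro φ
  rw [tsum_fintype]
  have hps : (suppF φ).powerset = Finset.univ.filter (fun A => A ⊆ suppF φ) := by
    ext A; simp
  rw [Cc, Finset.sum_mul, hps, Finset.sum_filter]
  apply Finset.sum_congr rfl
  intro A _
  by_cases hA : A ⊆ suppF φ
  · simp only [gq, if_pos hA]
  · simp only [gq, if_neg hA]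

/-- The key identity. -/
lemma tInd_eq (F : SimpleGraph (Fin l)) {ρ' : ℕ → ℝ} (h : memR ρ') :
    tInd F ρ' = ∑' φ : Fin l → ℕ, Cc F φ * mρ ρ' φ := by
  rw [tInd_eq_tsum_Wk F h, tsum_Wk_eq_gq F ρ', tsum_gq F h]

/-! ### Cancellation: `Cc` vanishes unless every nonzero value is repeated -/

lemma Cc_eq_zero (F : SimpleGraph (Fin l)) {φ : Fin l → ℕ} {v₀ : Fin l}
    (h0 : φ v₀ ≠ 0) (huniq : ∀ u, u ≠ v₀ → φ u ≠ φ v₀) : Cc F φ = 0 := by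
  have hv₀s : v₀ ∈ suppF φ := mem_suppF.mpr h0
  have hval : ∀ (C : Finset (Fin l)) u, fA φ C u ≠ 0 → fA φ C u = φ u := by
    intro C u hu
    by_cases hc : u ∈ C
    · simp [fA, hc]
    · exfalso; exact hu (by simp [fA, hc])
  have hfalse : ∀ (C : Finset (Fin l)) (u v : Fin l), (u = v₀ ∨ v = v₀) → u ≠ v →
      ¬(fA φ C u = fA φ C v ∧ fA φ C u ≠ 0) := by
    rintro C u v hor huv ⟨heq, hne⟩
    have h1 : fA φ C u = φ u := hval C u hne
    have h2 : fA φ C v = φ v := hval C v (by rw [← heq]; exact hne)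
    have heq2 : φ u = φ v := by rw [← h1, heq, h2]
    rcases hor with rfl | rfl
    · exact huniq v (Ne.symm huv) heq2.symm
    · exact huniq u huv heq2
  have hPiff : ∀ A B : Finset (Fin l), (∀ v, v ≠ v₀ → (v ∈ A ↔ v ∈ B)) →
      (Pcond F (fA φ A) → Pcond F (fA φ B)) := by
    intro A B hAB hA u v huv
    by_cases hu : u = v₀
    · subst hu
      constructor
      · intro hnadj
        exact absurd ((hA u v huv).mp hnadj) (hfalse A u v (Or.inl rfl) huv)
      · intro hRHS
        exact absurd hRHS (hfalse B u v (Or.inl rfl) huv)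
    · by_cases hv : v = v₀
      · subst hv
        constructor
        · intro hnadj
          exact absurd ((hA u v huv).mp hnadj) (hfalse A u v (Or.inr rfl) huv)
        · intro hRHS
          exact absurd hRHS (hfalse B u v (Or.inr rfl) huv)
      · have h1 : fA φ B u = fA φ A u := by
          simp only [fA]
          exact if_congr (hAB u hu).symm rfl rfl
        have h2 : fA φ B v = fA φ A v := by
          simp only [fA]
          exact if_congr (hAB v hv).symm rfl rfl
        rw [h1, h2]
        exact hA u v huv
  rw [Cc]
  have hzero : ∀ A ∈ (suppF φ).powerset,
      (if Pcond F (fA φ A) then (-1 : ℝ) ^ ((suppF φ \ A).card) else 0)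
        + (if Pcond F (fA φ (if v₀ ∈ A then A.erase v₀ else insert v₀ A)) then
            (-1 : ℝ) ^ ((suppF φ \ (if v₀ ∈ A then A.erase v₀ else insert v₀ A)).card) else 0)
        = 0 := by
    intro A hA
    by_cases hmem : v₀ ∈ A
    · simp only [if_pos hmem]
      have hPeq : Pcond F (fA φ A) ↔ Pcond F (fA φ (A.erase v₀)) :=
        ⟨hPiff A _ (fun v hv => by simp [Finset.mem_erase, hv]),
         hPiff _ A (fun v hv => by simp [Finset.mem_erase, hv])⟩
      have hset : suppF φ \ A.erase v₀ = insert v₀ (suppF φ \ A) := by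
        ext w
        simp only [Finset.mem_sdiff, Finset.mem_erase, Finset.mem_insert, not_and]
        constructor
        · rintro ⟨hw, hw2⟩
          by_cases hwv : w = v₀
          · exact Or.inl hwv
          · exact Or.inr ⟨hw, hw2 hwv⟩
        · rintro (rfl | ⟨hw, hwA⟩)
          · exact ⟨hv₀s, fun hne => absurd rfl hne⟩
          · exact ⟨hw, fun _ => hwA⟩
      have hcard : (suppF φ \ A.erase v₀).card = (suppF φ \ A).card + 1 := by
        rw [hset, Finset.card_insert_of_notMem (by simp [Finset.mem_sdiff, hmem])]
      by_cases hP : Pcond F (fA φ A)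
      · rw [if_pos hP, if_pos (hPeq.mp hP), hcard, pow_succ]
        ring
      · rw [if_neg hP, if_neg (fun hc => hP (hPeq.mpr hc))]
        ring
    · simp only [if_neg hmem]
      have hPeq : Pcond F (fA φ A) ↔ Pcond F (fA φ (insert v₀ A)) :=
        ⟨hPiff A _ (fun v hv => by simp [Finset.mem_insert, hv]),
         hPiff _ A (fun v hv => by simp [Finset.mem_insert, hv])⟩
      have hset : suppF φ \ A = insert v₀ (suppF φ \ insert v₀ A) := by
        ext w
        simp only [Finset.mem_sdiff, Finset.mem_insert, not_or]
        constructor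
        · rintro ⟨hw, hwA⟩
          by_cases hwv : w = v₀
          · exact Or.inl hwv
          · exact Or.inr ⟨hw, hwv, hwA⟩
        · rintro (rfl | ⟨hw, _, hwA⟩)
          · exact ⟨hv₀s, hmem⟩
          · exact ⟨hw, hwA⟩
      have hcard : (suppF φ \ A).card = (suppF φ \ insert v₀ A).card + 1 := by
        rw [hset, Finset.card_insert_of_notMem (by simp [Finset.mem_sdiff])]
      by_cases hP : Pcond F (fA φ A)
      · rw [if_pos hP, if_pos (hPeq.mp hP), hcard, pow_succ]
        ring
      · rw [if_neg hP, if_neg (fun hc => hP (hPeq.mpr hc))]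
        ring
  have hne : ∀ A ∈ (suppF φ).powerset,
      (if Pcond F (fA φ A) then (-1 : ℝ) ^ ((suppF φ \ A).card) else 0) ≠ 0 →
      (if v₀ ∈ A then A.erase v₀ else insert v₀ A) ≠ A := by
    intro A _ _
    by_cases hmem : v₀ ∈ A
    · rw [if_pos hmem]
      intro hcontra
      apply Finset.notMem_erase v₀ A
      rw [hcontra]
      exact hmem
    · rw [if_neg hmem]
      intro hcontra
      exact hmem (hcontra ▸ Finset.mem_insert_self v₀ A)
  have hmemg : ∀ A ∈ (suppF φ).powerset,
      (if v₀ ∈ A then A.erase v₀ else insert v₀ A) ∈ (suppF φ).powerset := by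
    intro A hA
    have hAsub : A ⊆ suppF φ := Finset.mem_powerset.mp hA
    by_cases hmem : v₀ ∈ A
    · rw [if_pos hmem]
      exact Finset.mem_powerset.mpr ((Finset.erase_subset _ _).trans hAsub)
    · rw [if_neg hmem]
      exact Finset.mem_powerset.mpr (Finset.insert_subset hv₀s hAsub)
  have hinv : ∀ (A : Finset (Fin l)), A ∈ (suppF φ).powerset →
      (if v₀ ∈ (if v₀ ∈ A then A.erase v₀ else insert v₀ A) then
        (if v₀ ∈ A then A.erase v₀ else insert v₀ A).erase v₀
      else insert v₀ (if v₀ ∈ A then A.erase v₀ else insert v₀ A)) = A := by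
    intro A _
    by_cases hmem : v₀ ∈ A
    · rw [if_pos hmem, if_neg (Finset.notMem_erase v₀ A)]
      exact Finset.insert_erase hmem
    · rw [if_neg hmem, if_pos (Finset.mem_insert_self v₀ A)]
      exact Finset.erase_insert hmem
  exact Finset.sum_involution (fun A _ => if v₀ ∈ A then A.erase v₀ else insert v₀ A)
    hzero hne hmemg (fun A hA => hinv A hA)

/-! ### The dominating function -/

/-- Uniform per-label bound. -/
noncomputable def ccF : ℕ → ℝ := fun j => if j = 0 then 1 else 1 / (j : ℝ)

/-- Square of the uniform bound. -/
noncomputable def cc2 : ℕ → ℝ := fun j => if j = 0 then 1 else (1 / (j : ℝ)) ^ 2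

lemma ccF_nonneg (j : ℕ) : 0 ≤ ccF j := by
  by_cases hj : j = 0 <;> simp [ccF, hj] <;> positivity

lemma ccF_le_one (j : ℕ) : ccF j ≤ 1 := by
  by_cases hj : j = 0
  · simp [ccF, hj]
  · have h1 : (1 : ℝ) ≤ (j : ℝ) := by
      exact_mod_cast Nat.one_le_iff_ne_zero.mpr hj
    simp only [ccF, if_neg hj]
    rw [div_le_one (by linarith)]
    exact h1

lemma cc2_nonneg (j : ℕ) : 0 ≤ cc2 j := by
  by_cases hj : j = 0 <;> simp [cc2, hj] <;> positivity

lemma ccF_sq (j : ℕ) : ccF j ^ 2 = cc2 j := by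
  by_cases hj : j = 0 <;> simp [ccF, cc2, hj]

/-- Goodness: every nonzero value is attained at least twice. -/
def GoodP (φ : Fin l → ℕ) : Prop := ∀ v, φ v ≠ 0 → ∃ u, u ≠ v ∧ φ u = φ v

/-- The dominating function. -/
noncomputable def Db : (Fin l → ℕ) → ℝ :=
  fun φ => if GoodP φ then (2 : ℝ) ^ l * ∏ v, ccF (φ v) else 0

lemma Db_nonneg (φ : Fin l → ℕ) : 0 ≤ Db φ := by
  rw [Db]
  split
  · exact mul_nonneg (by positivity) (Finset.prod_nonneg fun v _ => ccF_nonneg _)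
  · exact le_refl 0

lemma abs_term_le (F : SimpleGraph (Fin l)) {ρ' : ℕ → ℝ} (h : memR ρ')
    (φ : Fin l → ℕ) : |Cc F φ * mρ ρ' φ| ≤ Db φ := by
  by_cases hG : GoodP φ
  · rw [Db, if_pos hG, abs_mul]
    have h1 : |Cc F φ| ≤ (2 : ℝ) ^ l := by
      calc |Cc F φ|
          ≤ ∑ A ∈ (suppF φ).powerset,
              |if Pcond F (fA φ A) then (-1 : ℝ) ^ ((suppF φ \ A).card) else 0| :=
            Finset.abs_sum_le_sum_abs _ _
        _ ≤ ∑ _A ∈ (suppF φ).powerset, (1 : ℝ) := by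
            apply Finset.sum_le_sum
            intro A _
            split
            · rw [abs_pow, abs_neg, abs_one, one_pow]
            · simp
        _ = ((suppF φ).powerset.card : ℝ) := by
            rw [Finset.sum_const, nsmul_eq_mul, mul_one]
        _ = ((2 : ℝ)) ^ (suppF φ).card := by
            rw [Finset.card_powerset]
            push_cast
            ring
        _ ≤ (2 : ℝ) ^ l := by
            apply pow_le_pow_right₀ (by norm_num)
            calc (suppF φ).card ≤ Fintype.card (Fin l) := Finset.card_le_univ _
              _ = l := Fintype.card_fin l
    have h2 : |mρ ρ' φ| ≤ ∏ v, ccF (φ v) := by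
      rw [mρ_eq_prod_w1, abs_of_nonneg (Finset.prod_nonneg fun v _ => w1_nonneg h _)]
      apply Finset.prod_le_prod (fun v _ => w1_nonneg h _)
      intro v _
      by_cases hv : φ v = 0
      · simp [w1, ccF, hv]
      · simp only [w1, ccF, if_neg hv]
        have hle := memR_le_inv h (φ v - 1)
        have hcast : ((φ v - 1 : ℕ) : ℝ) + 1 = (φ v : ℝ) := by
          have hnat : (φ v - 1) + 1 = φ v := Nat.succ_pred_eq_of_pos (Nat.pos_of_ne_zero hv)
          exact_mod_cast congrArg (Nat.cast (R := ℝ)) hnat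
        rw [hcast] at hle
        exact hle
    exact mul_le_mul h1 h2 (abs_nonneg _)
      (by positivity)
  · rw [Db, if_neg hG]
    rw [GoodP] at hG
    push_neg at hG
    obtain ⟨v₀, h0, huniq⟩ := hG
    have huniq' : ∀ u, u ≠ v₀ → φ u ≠ φ v₀ := fun u hu => huniq u hu
    rw [Cc_eq_zero F h0 huniq', zero_mul, abs_zero]

/-! ### Summability of the dominating function -/

lemma min'_congr {α : Type*} [LinearOrder α] {s t : Finset α} (h : s = t)
    (hs : s.Nonempty) (ht : t.Nonempty) : s.min' hs = t.min' ht := by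
  subst h; rfl

/-- Representative of the class of a vertex. -/
noncomputable def repφ (φ : Fin l → ℕ) (v : Fin l) : Fin l :=
  (Finset.univ.filter fun u => φ u = φ v).min'
    ⟨v, Finset.mem_filter.mpr ⟨Finset.mem_univ v, rfl⟩⟩

lemma repφ_spec (φ : Fin l → ℕ) (v : Fin l) : φ (repφ φ v) = φ v := by
  have := Finset.min'_mem (Finset.univ.filter fun u => φ u = φ v)
    ⟨v, Finset.mem_filter.mpr ⟨Finset.mem_univ v, rfl⟩⟩
  exact (Finset.mem_filter.mp this).2

lemma repφ_idem (φ : Fin l → ℕ) (v : Fin l) : repφ φ (repφ φ v) = repφ φ v := by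
  have hcls : (Finset.univ.filter fun u => φ u = φ (repφ φ v))
      = (Finset.univ.filter fun u => φ u = φ v) := by
    ext u
    simp [repφ_spec]
  exact min'_congr hcls _ _

/-- The classes-and-labels encoding. -/
noncomputable def σφ (φ : Fin l → ℕ) : Fin l → Fin l :=
  fun v => if φ v = 0 then v else repφ φ v

noncomputable def τφ (φ : Fin l → ℕ) : Fin l → ℕ :=
  fun v => if φ v ≠ 0 ∧ repφ φ v = v then φ v else 0

lemma recon (φ : Fin l → ℕ) (v : Fin l) : τφ φ (σφ φ v) = φ v := by
  by_cases hv : φ v = 0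
  · simp [σφ, τφ, hv]
  · have hr := repφ_spec φ v
    have hi := repφ_idem φ v
    simp only [σφ, if_neg hv, τφ]
    rw [if_pos ⟨by rw [hr]; exact hv, hi⟩, hr]

lemma iota_inj : Function.Injective (fun φ : Fin l → ℕ => (σφ φ, τφ φ)) := by
  intro φ ψ hfeq
  have h1 : σφ φ = σφ ψ := congrArg Prod.fst hfeq
  have h2 : τφ φ = τφ ψ := congrArg Prod.snd hfeq
  funext v
  rw [← recon φ v, ← recon ψ v, h1, h2]

/-- The dominating function on the encoding space. -/
noncomputable def hhF : (Fin l → Fin l) × (Fin l → ℕ) → ℝ :=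
  fun p => (2 : ℝ) ^ l * ∏ v, cc2 (p.2 v)

lemma summable_cc2 : Summable cc2 := by
  rw [← summable_nat_add_iff 1]
  have h0 : Summable (fun n : ℕ => 1 / ((n : ℝ)) ^ 2) :=
    Real.summable_one_div_nat_pow.mpr one_lt_two
  have := h0.comp_injective Nat.succ_injective
  refine this.congr fun n => ?_
  show 1 / ((Nat.succ n : ℕ) : ℝ) ^ 2 = cc2 (n + 1)
  simp [cc2, div_pow]

lemma summable_hhF : Summable (hhF (l := l)) := by
  have hbase : Summable (fun p : (Fin l → Fin l) × (Fin l → ℕ) =>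
      (1 : ℝ) * ∏ v, cc2 (p.2 v)) := by
    apply Summable.mul_of_nonneg (Summable.of_finite (f := fun _ : Fin l → Fin l => (1 : ℝ)))
      (summable_fin_prod fun _ => summable_cc2)
      (fun _ => zero_le_one) (fun y => Finset.prod_nonneg fun v _ => cc2_nonneg _)
  have := hbase.mul_left ((2 : ℝ) ^ l)
  refine this.congr fun p => ?_
  show (2 : ℝ) ^ l * ((1 : ℝ) * ∏ v, cc2 (p.2 v)) = hhF p
  rw [hhF]
  ring

lemma Db_le (φ : Fin l → ℕ) : Db φ ≤ hhF (σφ φ, τφ φ) := by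
  by_cases hG : GoodP φ
  · rw [Db, if_pos hG, hhF]
    apply mul_le_mul_of_nonneg_left ?_ (by positivity)
    -- ∏ v, ccF (φ v) ≤ ∏ v, cc2 (τφ φ v)
    have key : ∏ v, ccF (φ v)
        = ∏ r, ∏ v ∈ Finset.univ.filter (fun v => σφ φ v = r), ccF (φ v) :=
      (Finset.prod_fiberwise_of_maps_to (fun v _ => Finset.mem_univ _) _).symm
    rw [key]
    apply Finset.prod_le_prod
      (fun r _ => Finset.prod_nonneg fun v _ => ccF_nonneg _)
    intro r _
    show ∏ v ∈ Finset.univ.filter (fun v => σφ φ v = r), ccF (φ v) ≤ cc2 (τφ φ r)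
    by_cases ht : τφ φ r = 0
    · rw [ht]
      have hcc2 : cc2 0 = 1 := by simp [cc2]
      rw [hcc2]
      exact Finset.prod_le_one (fun v _ => ccF_nonneg _) (fun v _ => ccF_le_one _)
    · have hcond : φ r ≠ 0 ∧ repφ φ r = r := by
        by_contra hc
        exact ht (by simp only [τφ, if_neg hc])
      have hτ : τφ φ r = φ r := by simp only [τφ]; rw [if_pos hcond]
      have hfib : Finset.univ.filter (fun v => σφ φ v = r)
          = Finset.univ.filter (fun v => φ v = φ r) := by
        ext v
        simp only [Finset.mem_filter, Finset.mem_univ, true_and]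
        constructor
        · intro hσ
          by_cases hv : φ v = 0
          · exfalso
            have : v = r := by simpa [σφ, hv] using hσ
            exact hcond.1 (this ▸ hv)
          · have hrep : repφ φ v = r := by simpa [σφ, hv] using hσ
            have := repφ_spec φ v
            rw [hrep] at this
            exact this.symm
        · intro hval
          have hv : φ v ≠ 0 := by rw [hval]; exact hcond.1
          simp only [σφ, if_neg hv]
          have hcls : (Finset.univ.filter fun u => φ u = φ v)
              = (Finset.univ.filter fun u => φ u = φ r) := by
            ext u; simp [hval]
          calc repφ φ v = repφ φ r := min'_congr hcls _ _
            _ = r := hcond.2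
      rw [hfib]
      have hconst : ∏ v ∈ Finset.univ.filter (fun v => φ v = φ r), ccF (φ v)
          = ccF (φ r) ^ (Finset.univ.filter (fun v : Fin l => φ v = φ r)).card := by
        rw [Finset.prod_congr rfl (fun v hv => by rw [(Finset.mem_filter.mp hv).2]),
          Finset.prod_const]
      rw [hconst]
      have hcard : 2 ≤ (Finset.univ.filter (fun v : Fin l => φ v = φ r)).card := by
        obtain ⟨u, hu, huv⟩ := hG r hcond.1
        exact Finset.one_lt_card.mpr
          ⟨u, by simp [huv], r, by simp, hu⟩
      calc ccF (φ r) ^ (Finset.univ.filter (fun v : Fin l => φ v = φ r)).card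
          ≤ ccF (φ r) ^ 2 := pow_le_pow_of_le_one (ccF_nonneg _) (ccF_le_one _) hcard
        _ = cc2 (φ r) := ccF_sq _
        _ = cc2 (τφ φ r) := by rw [hτ]
  · rw [Db, if_neg hG, hhF]
    exact mul_nonneg (by positivity) (Finset.prod_nonneg fun v _ => cc2_nonneg _)

lemma summable_Db : Summable (Db (l := l)) := by
  refine Summable.of_nonneg_of_le Db_nonneg (fun φ => Db_le φ) ?_
  exact summable_hhF.comp_injective iota_inj

end TIndAux

open TIndAux in
/-- If a sequence of elements of `R` converges pointwise to `ρ ∈ [0,1]^ℕ`, then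
`ρ ∈ R` and the induced densities `t(F, ·)` of every finite simple graph `F` converge. -/
theorem tInd_continuous (ρseq : ℕ → ℕ → ℝ) (hmem : ∀ n, memR (ρseq n))
    (ρ : ℕ → ℝ) (hρ : ∀ i, ρ i ∈ Set.Icc (0:ℝ) 1)
    (hconv : ∀ i, Tendsto (fun n => ρseq n i) atTop (nhds (ρ i))) :
    memR ρ ∧ ∀ (l : ℕ) (F : SimpleGraph (Fin l)),
      Tendsto (fun n => tInd F (ρseq n)) atTop (nhds (tInd F ρ)) := by
  have hpartial : ∀ N, ∑ i ∈ Finset.range N, ρ i ≤ 1 := by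
    intro N
    have htend : Tendsto (fun n => ∑ i ∈ Finset.range N, ρseq n i) atTop
        (nhds (∑ i ∈ Finset.range N, ρ i)) :=
      tendsto_finset_sum _ (fun i _ => hconv i)
    apply le_of_tendsto htend
    apply Eventually.of_forall
    intro n
    calc ∑ i ∈ Finset.range N, ρseq n i ≤ ∑' i, ρseq n i :=
          Summable.sum_le_tsum _ (fun i _ => ((hmem n).1 i).1) (hmem n).2.2.1
      _ ≤ 1 := (hmem n).2.2.2
  have hmemρ : memR ρ := by
    refine ⟨fun i => ⟨(hρ i).1, (hρ i).2⟩, ?_, ?_, ?_⟩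
    · intro i
      exact le_of_tendsto_of_tendsto' (hconv (i + 1)) (hconv i)
        (fun n => (hmem n).2.1 i)
    · exact summable_of_sum_range_le (fun i => (hρ i).1) hpartial
    · exact Real.tsum_le_of_sum_range_le (fun i => (hρ i).1) hpartial
  refine ⟨hmemρ, ?_⟩
  intro l F
  have h1 : (fun n => tInd F (ρseq n))
      = fun n => ∑' φ : Fin l → ℕ, Cc F φ * mρ (ρseq n) φ :=
    funext fun n => tInd_eq F (hmem n)
  rw [h1, tInd_eq F hmemρ]
  apply tendsto_tsum_of_dominated_convergence (bound := Db) summable_Db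
  · intro φ
    have hfac : ∀ v : Fin l,
        Tendsto (fun n => if φ v = 0 then (1 : ℝ) else ρseq n (φ v - 1)) atTop
          (nhds (if φ v = 0 then (1 : ℝ) else ρ (φ v - 1))) := by
      intro v
      by_cases hv : φ v = 0
      · simp only [if_pos hv]
        exact tendsto_const_nhds
      · simp only [if_neg hv]
        exact hconv (φ v - 1)
    have hm : Tendsto (fun n => mρ (ρseq n) φ) atTop (nhds (mρ ρ φ)) := by
      simp only [mρ]
      exact tendsto_finset_prod _ (fun v _ => hfac v)
    exact hm.const_mul (Cc F φ)
  · apply Eventually.of_forall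
    intro n φ
    rw [Real.norm_eq_abs]
    exact abs_term_le F (hmem n) φ
end
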